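/- arXiv:2305.03307 — 2 statements merged into one kernel-verified Lean document; each statement's English description precedes it below -/
import Mathlib

section
/- In the construction of the reduction above, if I ⊆ V is an independent set of the graph G, then the edge set I' = {e_v : v ∈ I} in G' contains no broken circuit with respect to the ordering in which all edges of E precede all edges e_v. -/
/-!
Every endpoint of an edge `e` of a circuit `C` lies on a second edge of `C`, since a cycle of `C`
runs through `e`. If all edges of `C` other than `e` are cone edges `e_v` with `v ∈ I`, then every
vertex `v` of `G` on `e` lies on a cone edge `e_v ≠ e`, so `v ∈ I`. Hence `e` is neither an edge
`{u, v}` of `G`, whose ends would both lie in the independent set `I`, nor a cone edge `e_v`.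
-/

open SimpleGraph

section NBC

variable {W : Type*} [DecidableEq W]

def IsForestIn (H : SimpleGraph W) (S : Finset (Sym2 W)) : Prop :=
  ↑S ⊆ H.edgeSet ∧ (SimpleGraph.fromEdgeSet (↑S : Set (Sym2 W))).IsAcyclic

def IsGraphCircuit (H : SimpleGraph W) (C : Finset (Sym2 W)) : Prop :=
  ↑C ⊆ H.edgeSet ∧ ¬ (SimpleGraph.fromEdgeSet (↑C : Set (Sym2 W))).IsAcyclic ∧
    ∀ e ∈ C, (SimpleGraph.fromEdgeSet (↑(C.erase e) : Set (Sym2 W))).IsAcyclic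

def HasBrokenCircuit (H : SimpleGraph W) (ord : Sym2 W → ℕ) (S : Finset (Sym2 W)) : Prop :=
  ∃ C e, IsGraphCircuit H C ∧ e ∈ C ∧ (∀ f ∈ C, f ≠ e → ord e < ord f) ∧ C.erase e ⊆ S

end NBC

/-- The cone construction: add a new vertex `z = Sum.inr ()` to `G` and connect it to every
vertex of `G` by the edge `e_v = {z, v}`. -/
def coneGraph {V : Type*} (G : SimpleGraph V) : SimpleGraph (V ⊕ Unit) :=
  G.map (⟨Sum.inl, Sum.inl_injective⟩ : V ↪ V ⊕ Unit) ⊔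
    SimpleGraph.fromEdgeSet {x | ∃ v : V, x = s(Sum.inr (), Sum.inl v)}

/-- The edge `e_v = {z, v}`. -/
def coneEdge {V : Type*} (v : V) : Sym2 (V ⊕ Unit) := s(Sum.inr (), Sum.inl v)

section Circuit

variable {W : Type*} {H : SimpleGraph W}

theorem SimpleGraph.Walk.IsCycle.exists_mem_edges_ne_of_mem_support {u x : W} {p : H.Walk u u}
    (hp : p.IsCycle) (hx : x ∈ p.support) (e : Sym2 W) : ∃ f ∈ p.edges, f ≠ e ∧ x ∈ f := by
  obtain ⟨y₁, y₂, hne, hnbr⟩ := Set.ncard_eq_two.mp (hp.ncard_neighborSet_toSubgraph_eq_two hx)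
  have hedge : ∀ y ∈ ({y₁, y₂} : Set W), s(x, y) ∈ p.edges := fun y hy =>
    Walk.adj_toSubgraph_iff_mem_edges.mp (by rwa [← Subgraph.mem_neighborSet, hnbr])
  by_cases h₁ : s(x, y₁) = e
  · refine ⟨s(x, y₂), hedge y₂ (by simp), fun h₂ => hne ?_, Sym2.mem_mk_left x y₂⟩
    exact Sym2.congr_right.mp (h₁.trans h₂.symm)
  · exact ⟨s(x, y₁), hedge y₁ (by simp), h₁, Sym2.mem_mk_left x y₁⟩

variable [DecidableEq W] {C : Finset (Sym2 W)} {e : Sym2 W}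

theorem IsGraphCircuit.exists_isCycle_mem_edges (hC : IsGraphCircuit H C) (he : e ∈ C) :
    ∃ (u : W) (p : (fromEdgeSet (C : Set (Sym2 W))).Walk u u), p.IsCycle ∧ e ∈ p.edges := by
  obtain ⟨u, p, hp⟩ : ∃ (u : W) (p : (fromEdgeSet (C : Set (Sym2 W))).Walk u u), p.IsCycle := by
    simpa [IsAcyclic] using hC.2.1
  refine ⟨u, p, hp, by_contra fun hep => ?_⟩
  have hsub : ∀ f ∈ p.edges, f ∈ (fromEdgeSet (↑(C.erase e) : Set (Sym2 W))).edgeSet := by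
    intro f hf
    have hfC := p.edges_subset_edgeSet hf
    rw [edgeSet_fromEdgeSet] at hfC ⊢
    exact ⟨by simpa using ⟨hfC.1, ne_of_mem_of_not_mem hf hep⟩, hfC.2⟩
  exact hC.2.2 e he (p.transfer _ hsub) (hp.transfer hsub)

theorem IsGraphCircuit.exists_mem_ne_of_mem (hC : IsGraphCircuit H C) (he : e ∈ C) {x : W}
    (hx : x ∈ e) : ∃ f ∈ C, f ≠ e ∧ x ∈ f := by
  obtain ⟨u, p, hp, hep⟩ := hC.exists_isCycle_mem_edges he
  have hxp : x ∈ p.support := by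
    rw [← Sym2.other_spec hx] at hep
    exact p.fst_mem_support_of_mem_edges hep
  obtain ⟨f, hfp, hfe, hxf⟩ := hp.exists_mem_edges_ne_of_mem_support hxp e
  have hfC := p.edges_subset_edgeSet hfp
  rw [edgeSet_fromEdgeSet] at hfC
  exact ⟨f, hfC.1, hfe, hxf⟩

end Circuit

section Cone

variable {V : Type*} {G : SimpleGraph V}

theorem inl_mem_coneEdge_iff {a v : V} : Sum.inl a ∈ coneEdge v ↔ a = v := by
  simp [coneEdge]

theorem mem_edgeSet_coneGraph {e : Sym2 (V ⊕ Unit)} :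
    e ∈ (coneGraph G).edgeSet ↔
      (∃ a b, G.Adj a b ∧ e = s(Sum.inl a, Sum.inl b)) ∨ ∃ v, e = coneEdge v := by
  induction e using Sym2.ind with
  | h x y =>
    rcases x with a | ⟨⟩ <;> rcases y with b | ⟨⟩ <;> simp [coneGraph, coneEdge]
    rw [show (G.map Sum.inl).Adj (Sum.inl a) (Sum.inl b) ↔ G.Adj a b from
      map_adj_apply (f := ⟨Sum.inl, Sum.inl_injective⟩)]
    refine ⟨fun h => ⟨a, b, h, .inl ⟨rfl, rfl⟩⟩, ?_⟩
    rintro ⟨c, d, h, ⟨rfl, rfl⟩ | ⟨rfl, rfl⟩⟩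
    exacts [h, h.symm]

theorem IsGraphCircuit.mem_of_inl_mem_of_erase_subset_image_coneEdge [DecidableEq V]
    {I : Finset V} {C : Finset (Sym2 (V ⊕ Unit))} {e : Sym2 (V ⊕ Unit)}
    (hC : IsGraphCircuit (coneGraph G) C) (he : e ∈ C) (hsub : C.erase e ⊆ I.image coneEdge)
    {a : V} (ha : Sum.inl a ∈ e) : a ∈ I ∧ coneEdge a ≠ e := by
  obtain ⟨f, hfC, hfe, haf⟩ := hC.exists_mem_ne_of_mem he ha
  obtain ⟨v, hvI, rfl⟩ := Finset.mem_image.mp (hsub (Finset.mem_erase.mpr ⟨hfe, hfC⟩))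
  obtain rfl := inl_mem_coneEdge_iff.mp haf
  exact ⟨hvI, hfe⟩

end Cone

theorem indep_set_image_no_broken_circuit_general {V : Type*} [DecidableEq V]
    (G : SimpleGraph V) (ord : Sym2 (V ⊕ Unit) → ℕ)
    (I : Finset V) (hI : ∀ u ∈ I, ∀ v ∈ I, u ≠ v → ¬ G.Adj u v) :
    ¬ HasBrokenCircuit (coneGraph G) ord (I.image coneEdge) := by
  rintro ⟨C, e, hC, heC, -, hsub⟩
  have key {a : V} (ha : Sum.inl a ∈ e) : a ∈ I ∧ coneEdge a ≠ e :=
    hC.mem_of_inl_mem_of_erase_subset_image_coneEdge heC hsub ha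
  rcases mem_edgeSet_coneGraph.mp (hC.1 heC) with ⟨a, b, hab, rfl⟩ | ⟨v, rfl⟩
  · exact hI a (key (Sym2.mem_mk_left _ _)).1 b (key (Sym2.mem_mk_right _ _)).1 hab.ne hab
  · exact (key (Sym2.mem_mk_right _ _)).2 rfl

/-- If `I` is an independent set of `G`, then the edge set `I' = {e_v : v ∈ I}` in the cone
`G'` over `G` contains no broken circuit, with respect to any ordering in which every edge of
`G` precedes every edge `e_v`. -/
theorem indep_set_image_no_broken_circuit {V : Type*} [DecidableEq V]
    (G : SimpleGraph V) (ord : Sym2 (V ⊕ Unit) → ℕ) (hordinj : Function.Injective ord)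
    (hord : ∀ a b : V, G.Adj a b → ∀ v : V, ord s(Sum.inl a, Sum.inl b) < ord (coneEdge v))
    (I : Finset V) (hI : ∀ u ∈ I, ∀ v ∈ I, u ≠ v → ¬ G.Adj u v) :
    ¬ HasBrokenCircuit (coneGraph G) ord (I.image coneEdge) :=
  indep_set_image_no_broken_circuit_general G ord I hI
end

section
/- Let G = K_{n,n} with parts A, B, and construct G' by adding vertices y, z, and z_{v,i} for v ∈ A∪B, i ∈ [ℓ], with edges e_0 = {y,z}, e_{v,i} = {z, z_{v,i}}, f_{v,i} = {z_{v,i}, v}. Order the edges as e_0 < E(G) < {e_{v,i}} < {f_{v,i}}. Let M be the graphic matroid of G' truncated to rank 2ℓn + n + 1 and let τ = {e_{v,i} : v ∈ A∪B, i ∈ [ℓ]}. Then for every facet S of the link of τ in the broken circuit complex of (M, O), either S contains no edge f_{v,i} with v ∈ A, or S contains no edge f_{u,j} with u ∈ B. -/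
open SimpleGraph

section NBC

variable {W : Type*} [DecidableEq W]

/-- Circuits of the graphic matroid truncated to rank `r'`: the graph circuits together with
all forests of size `r' + 1`. -/
def IsTruncCircuit (H : SimpleGraph W) (r' : ℕ) (C : Finset (Sym2 W)) : Prop :=
  IsGraphCircuit H C ∨ (IsForestIn H C ∧ C.card = r' + 1)

def TruncHasBrokenCircuit (H : SimpleGraph W) (r' : ℕ) (ord : Sym2 W → ℕ)
    (S : Finset (Sym2 W)) : Prop :=
  ∃ C e, IsTruncCircuit H r' C ∧ e ∈ C ∧ (∀ f ∈ C, f ≠ e → ord e < ord f) ∧ C.erase e ⊆ S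

/-- NBC bases of the graphic matroid of `H` truncated to rank `r'`: forests with exactly
`r'` edges containing no broken circuit of the truncation. -/
def IsTruncNBCBasis (H : SimpleGraph W) (r' : ℕ) (ord : Sym2 W → ℕ)
    (B : Finset (Sym2 W)) : Prop :=
  IsForestIn H B ∧ B.card = r' ∧ ¬ TruncHasBrokenCircuit H r' ord B

end NBC

/-- Vertices: `Sum.inl (true, a)` = vertex `a` of side `A`, `Sum.inl (false, b)` = vertex `b`
of side `B`, `Sum.inr (Sum.inl (v, i))` = `z_{v,i}`, `Sum.inr (Sum.inr true)` = `y`,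
`Sum.inr (Sum.inr false)` = `z`. -/
abbrev W8 : Type := (Bool × ℕ) ⊕ ((Bool × ℕ) × ℕ) ⊕ Bool

def y8 : W8 := Sum.inr (Sum.inr true)
def z8 : W8 := Sum.inr (Sum.inr false)
def e0 : Sym2 W8 := s(y8, z8)
def eE (v : Bool × ℕ) (i : ℕ) : Sym2 W8 := s(z8, Sum.inr (Sum.inl (v, i)))
def fE (v : Bool × ℕ) (i : ℕ) : Sym2 W8 := s(Sum.inr (Sum.inl (v, i)), Sum.inl v)

/-- The graph `G'`: the complete bipartite graph `K_{n,n}` together with `y, z`, the `z_{v,i}`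
and the edges `e_0`, `e_{v,i}`, `f_{v,i}` (`i ∈ [ℓ]`). -/
def G8 (n ℓ : ℕ) : SimpleGraph W8 :=
  SimpleGraph.fromEdgeSet
    ({x | ∃ a < n, ∃ b < n, x = s(Sum.inl (true, a), Sum.inl (false, b))} ∪ {e0} ∪
     {x | ∃ v : Bool × ℕ, v.2 < n ∧ ∃ i < ℓ, x = eE v i ∨ x = fE v i})

/-- The face `τ = {e_{v,i} : v ∈ A ∪ B, i ∈ [ℓ]}`. -/
def tau8 (n ℓ : ℕ) : Finset (Sym2 W8) :=
  (((Finset.univ : Finset Bool) ×ˢ Finset.range n) ×ˢ Finset.range ℓ).image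
    fun p => eE p.1 p.2

/-!
If an NBC basis `B ⊇ τ` contained `f_{a,i}` and `f_{b,j}` with `a` on side `A` and `b` on the
other side, then with `e_{a,i}, e_{b,j} ∈ τ` these edges close the cycle `z, z_{a,i}, a, b,
z_{b,j}` through the edge `ab`, which is the smallest of its five edges. A circuit inside this
cycle cannot avoid `ab`, since the other four edges lie in the forest `B`; removing `ab` from it
gives a broken circuit in `B`.
-/

section GraphicMatroid

variable {W : Type*} {H : SimpleGraph W}

theorem not_isAcyclic_fromEdgeSet_edges {u : W} {c : H.Walk u u} (hc : c.IsCycle) :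
    ¬ (fromEdgeSet {e | e ∈ c.edges}).IsAcyclic := fun hacyc =>
  hacyc _ (hc.transfer fun _ he =>
    (edgeSet_fromEdgeSet _ ▸ ⟨he, H.not_isDiag_of_mem_edgeSet (c.edges_subset_edgeSet he)⟩))

variable [DecidableEq W]

theorem exists_isGraphCircuit_subset {X : Finset (Sym2 W)} (hX : ↑X ⊆ H.edgeSet)
    (hdep : ¬ (fromEdgeSet (↑X : Set (Sym2 W))).IsAcyclic) :
    ∃ C ⊆ X, IsGraphCircuit H C := by
  obtain ⟨C, hCX, hmin⟩ := exists_minimal_le_of_wellFoundedLT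
    (fun C : Finset (Sym2 W) => ¬ (fromEdgeSet (↑C : Set (Sym2 W))).IsAcyclic) X hdep
  refine ⟨C, hCX, (Finset.coe_subset.2 hCX).trans hX, hmin.prop, fun e he => ?_⟩
  exact not_not.1 (hmin.not_prop_of_lt (Finset.erase_ssubset he))

theorem truncHasBrokenCircuit_of_isCycle {r' : ℕ} {ord : Sym2 W → ℕ} {S : Finset (Sym2 W)}
    (hS : (fromEdgeSet (↑S : Set (Sym2 W))).IsAcyclic) {u : W} {c : H.Walk u u}
    (hc : c.IsCycle) {e : Sym2 W} (hmin : ∀ f ∈ c.edges, f ≠ e → ord e < ord f)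
    (hcS : ∀ f ∈ c.edges, f ≠ e → f ∈ S) :
    TruncHasBrokenCircuit H r' ord S := by
  obtain ⟨C, hCc, hC⟩ := exists_isGraphCircuit_subset (X := c.edges.toFinset)
    (fun f hf => c.edges_subset_edgeSet (by simpa using hf))
    (by simpa using not_isAcyclic_fromEdgeSet_edges hc)
  have hCS : C.erase e ⊆ S := fun f hf => by
    obtain ⟨hfe, hfC⟩ := Finset.mem_erase.1 hf
    exact hcS f (List.mem_toFinset.1 (hCc hfC)) hfe
  have heC : e ∈ C := by
    by_contra heC
    exact hC.2.1 (hS.anti (fromEdgeSet_mono (by simpa [Finset.erase_eq_of_notMem heC] using hCS)))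
  exact ⟨C, e, Or.inl hC, heC, fun f hf hfe => hmin f (List.mem_toFinset.1 (hCc hf)) hfe, hCS⟩

end GraphicMatroid

section G8

variable {n ℓ : ℕ}

theorem G8_adj_bipartite {a b : ℕ} (ha : a < n) (hb : b < n) :
    (G8 n ℓ).Adj (Sum.inl (true, a)) (Sum.inl (false, b)) := by
  rw [G8, fromEdgeSet_adj]
  exact ⟨Or.inl (Or.inl ⟨a, ha, b, hb, rfl⟩), by simp⟩

theorem G8_adj_eE {v : Bool × ℕ} (hv : v.2 < n) {i : ℕ} (hi : i < ℓ) :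
    (G8 n ℓ).Adj z8 (Sum.inr (Sum.inl (v, i))) := by
  rw [G8, fromEdgeSet_adj]
  exact ⟨Or.inr ⟨v, hv, i, hi, Or.inl rfl⟩, by simp [z8]⟩

theorem G8_adj_fE {v : Bool × ℕ} (hv : v.2 < n) {i : ℕ} (hi : i < ℓ) :
    (G8 n ℓ).Adj (Sum.inr (Sum.inl (v, i))) (Sum.inl v) := by
  rw [G8, fromEdgeSet_adj]
  exact ⟨Or.inr ⟨v, hv, i, hi, Or.inr rfl⟩, by simp⟩

def crossCycle {a b i j : ℕ} (ha : a < n) (hb : b < n) (hi : i < ℓ) (hj : j < ℓ) :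
    (G8 n ℓ).Walk z8 z8 :=
  .cons (G8_adj_eE (v := (true, a)) ha hi) <| .cons (G8_adj_fE (v := (true, a)) ha hi) <|
  .cons (G8_adj_bipartite ha hb) <| .cons (G8_adj_fE (v := (false, b)) hb hj).symm <|
  .cons (G8_adj_eE (v := (false, b)) hb hj).symm .nil

theorem crossCycle_isCycle {a b i j : ℕ} (ha : a < n) (hb : b < n) (hi : i < ℓ) (hj : j < ℓ) :
    (crossCycle ha hb hi hj).IsCycle := by
  rw [crossCycle, Walk.cons_isCycle_iff, Walk.isPath_def]
  simp only [Walk.support_cons, Walk.support_nil, Walk.edges_cons, Walk.edges_nil]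
  simp [z8]

theorem crossCycle_edges {a b i j : ℕ} (ha : a < n) (hb : b < n) (hi : i < ℓ) (hj : j < ℓ) :
    (crossCycle ha hb hi hj).edges = [eE (true, a) i, fE (true, a) i,
      s(Sum.inl (true, a), Sum.inl (false, b)), fE (false, b) j, eE (false, b) j] := by
  simp [crossCycle, eE, fE, Sym2.eq_swap]

theorem eE_mem_tau8 {v : Bool × ℕ} (hv : v.2 < n) {i : ℕ} (hi : i < ℓ) :
    eE v i ∈ tau8 n ℓ :=
  Finset.mem_image.2 ⟨(v, i), by simp [hv, hi], rfl⟩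

end G8

theorem facet_of_link_misses_one_side_general (n ℓ : ℕ)
    (ord : Sym2 W8 → ℕ)
    (hEe : ∀ a < n, ∀ b < n, ∀ v : Bool × ℕ, v.2 < n → ∀ i < ℓ,
      ord s(Sum.inl (true, a), Sum.inl (false, b)) < ord (eE v i))
    (hef : ∀ v : Bool × ℕ, v.2 < n → ∀ i < ℓ, ∀ u : Bool × ℕ, u.2 < n → ∀ j < ℓ,
      ord (eE v i) < ord (fE u j)) :
    ∀ B : Finset (Sym2 W8),
      IsTruncNBCBasis (G8 n ℓ) (2 * ℓ * n + n + 1) ord B → tau8 n ℓ ⊆ B →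
      (∀ a < n, ∀ i < ℓ, fE (true, a) i ∉ B) ∨ (∀ b < n, ∀ i < ℓ, fE (false, b) i ∉ B) := by
  intro B hB hτB
  by_contra! hboth
  obtain ⟨⟨a, ha, i, hi, hfa⟩, b, hb, j, hj, hfb⟩ := hboth
  set ab := s(Sum.inl (true, a), Sum.inl (false, b))
  have hlt_e : ∀ v : Bool × ℕ, v.2 < n → ∀ k < ℓ, ord ab < ord (eE v k) := hEe a ha b hb
  have hlt_f : ∀ v : Bool × ℕ, v.2 < n → ∀ k < ℓ, ord ab < ord (fE v k) := fun v hv k hk =>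
    (hlt_e (true, a) ha i hi).trans (hef (true, a) ha i hi v hv k hk)
  refine hB.2.2 (truncHasBrokenCircuit_of_isCycle hB.1.2 (crossCycle_isCycle ha hb hi hj)
    (e := ab) (fun f hf hne => ?_) (fun f hf hne => ?_))
  all_goals
    simp only [crossCycle_edges, List.mem_cons, List.not_mem_nil, or_false] at hf
    rcases hf with rfl | rfl | rfl | rfl | rfl
  · exact hlt_e (true, a) ha i hi
  · exact hlt_f (true, a) ha i hi
  · exact absurd rfl hne
  · exact hlt_f (false, b) hb j hj
  · exact hlt_e (false, b) hb j hj
  · exact hτB (eE_mem_tau8 (v := (true, a)) ha hi)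
  · exact hfa
  · exact absurd rfl hne
  · exact hfb
  · exact hτB (eE_mem_tau8 (v := (false, b)) hb hj)

/-- In the `K_{n,n}` construction, with the graphic matroid of `G'` truncated to rank
`2ℓn + n + 1` and any edge ordering with `e_0 < E(G) < {e_{v,i}} < {f_{v,i}}`, every facet of
the link of `τ` in the broken circuit complex (i.e. every NBC basis `B ⊇ τ`) avoids either
all `f`-edges on side `A` or all `f`-edges on side `B`. -/
theorem facet_of_link_misses_one_side (n ℓ : ℕ) (hn : 1 ≤ n) (hℓ : 1 ≤ ℓ)
    (ord : Sym2 W8 → ℕ) (hinj : Function.Injective ord)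
    (h0E : ∀ a < n, ∀ b < n, ord e0 < ord s(Sum.inl (true, a), Sum.inl (false, b)))
    (hEe : ∀ a < n, ∀ b < n, ∀ v : Bool × ℕ, v.2 < n → ∀ i < ℓ,
      ord s(Sum.inl (true, a), Sum.inl (false, b)) < ord (eE v i))
    (hef : ∀ v : Bool × ℕ, v.2 < n → ∀ i < ℓ, ∀ u : Bool × ℕ, u.2 < n → ∀ j < ℓ,
      ord (eE v i) < ord (fE u j)) :
    ∀ B : Finset (Sym2 W8),
      IsTruncNBCBasis (G8 n ℓ) (2 * ℓ * n + n + 1) ord B → tau8 n ℓ ⊆ B →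
      (∀ a < n, ∀ i < ℓ, fE (true, a) i ∉ B) ∨ (∀ b < n, ∀ i < ℓ, fE (false, b) i ∉ B) :=
  facet_of_link_misses_one_side_general n ℓ ord hEe hef
end
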